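/- arXiv:1608.07628 — 3 statements merged into one kernel-verified Lean document; each statement's English description precedes it below -/
import Mathlib

section
/- Let π be a projection of ℝ^{n+1,n} (π² = π) with π π♯ = π♯ π = 0, where π♯ = C_n πᵗ C_n. Let α₁ ≠ α₂ be real. Define h_{α₁,α₂,π}(λ) = I + ((α₁−α₂)/(λ−α₁))(I−π) and g_{α₁,α₂,π} = h_{α₂,α₁,π♯} h_{α₁,α₂,π}. Then g_{α₁,α₂,π}(λ) = I + ((α₂−α₁)/(λ−α₂)) π + ((α₁−α₂)/(λ−α₁)) π♯, its inverse is g_{α₁,α₂,π♯}(λ) = I + ((α₂−α₁)/(λ−α₂)) π♯ + ((α₁−α₂)/(λ−α₁)) π, and g_{α₁,α₂,π}(λ)ᵗ C_n g_{α₁,α₂,π}(λ) = C_n for all λ ∉ {α₁, α₂}. -/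
open Matrix

/-- The signed anti-diagonal matrix `C_n`. -/
def Cmat (n : ℕ) : Matrix (Fin (2*n+1)) (Fin (2*n+1)) ℝ :=
  fun i j => if i.val + j.val = 2*n then (-1 : ℝ)^(n + i.val) else 0

/-- `h_{a,b,P}(λ) = I + ((a−b)/(λ−a))(I−P)`. -/
noncomputable def hmat (n : ℕ) (a b lam : ℝ) (P : Matrix (Fin (2*n+1)) (Fin (2*n+1)) ℝ) :
    Matrix (Fin (2*n+1)) (Fin (2*n+1)) ℝ :=
  1 + ((a - b)/(lam - a)) • ((1 : Matrix (Fin (2*n+1)) (Fin (2*n+1)) ℝ) - P)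

lemma Cmat_symm (n : ℕ) : (Cmat n)ᵀ = Cmat n := by
  ext i j
  simp only [transpose_apply, Cmat]
  by_cases h : i.val + j.val = 2*n
  · rw [if_pos (by omega), if_pos h]
    rcases Nat.even_or_odd (n + i.val) with he | ho
    · rw [he.neg_one_pow, Even.neg_one_pow (Nat.even_iff.mpr (by have := Nat.even_iff.mp he; omega))]
    · rw [ho.neg_one_pow, Odd.neg_one_pow (Nat.odd_iff.mpr (by have := Nat.odd_iff.mp ho; omega))]
  · rw [if_neg (by omega), if_neg h]

lemma Cmat_mul_self (n : ℕ) : Cmat n * Cmat n = 1 := by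
  ext i k
  rw [mul_apply, Finset.sum_eq_single (⟨2*n - i.val, by omega⟩ : Fin (2*n+1))]
  · simp only [Cmat]
    rw [if_pos (by omega)]
    by_cases h : i = k
    · subst h
      rw [if_pos (by omega), one_apply_eq, ← pow_add]
      have he : n + i.val + (n + (2*n - i.val)) = 4*n := by omega
      rw [he]
      exact Even.neg_one_pow ⟨2*n, by omega⟩
    · rw [if_neg (fun hc => h (Fin.ext (show i.val = k.val by omega))), mul_zero, one_apply_ne h]
  · intro j _ hj
    simp only [Cmat]
    rw [if_neg, zero_mul]
    intro hc
    exact hj (Fin.ext (show j.val = 2*n - i.val by omega))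
  · intro h; exact absurd (Finset.mem_univ _) h

section alg
variable {N : Type*} [Fintype N] [DecidableEq N]

lemma lemA (P S : Matrix N N ℝ) (hP : P*P = P) (hS : S*S = S)
    (hSP : S*P = 0) (a b : ℝ) (hab : a + b + a*b = 0) :
    (1 + b•(1-S)) * (1 + a•(1-P)) = 1 + b•P + a•S := by
  have hba : b*a = -a - b := by linarith [hab, mul_comm a b]
  simp only [mul_add, add_mul, mul_one, one_mul, Matrix.smul_mul, Matrix.mul_smul,
    smul_smul, sub_mul, mul_sub, hP, hS, hSP, hba]
  match_scalars <;> linarith [hab, mul_comm a b]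

lemma lemB (P S : Matrix N N ℝ) (hP : P*P = P) (hS : S*S = S)
    (hPS : P*S = 0) (hSP : S*P = 0) (a b : ℝ) (hab : a + b + a*b = 0) :
    (1 + b•P + a•S) * (1 + b•S + a•P) = 1 := by
  have hba : b*a = -a - b := by linarith [hab, mul_comm a b]
  have hab' : a*b = -a - b := by linarith [hab]
  simp only [mul_add, add_mul, mul_one, one_mul, Matrix.smul_mul, Matrix.mul_smul,
    smul_smul, hP, hS, hPS, hSP, hba, hab', smul_zero]
  match_scalars <;> linarith [hab, mul_comm a b]

end alg

theorem stmt8 (n : ℕ) (π : Matrix (Fin (2*n+1)) (Fin (2*n+1)) ℝ)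
    (hproj : π * π = π)
    (h1 : π * (Cmat n * πᵀ * Cmat n) = 0) (h2 : (Cmat n * πᵀ * Cmat n) * π = 0)
    (α₁ α₂ : ℝ) (hα : α₁ ≠ α₂) (lam : ℝ) (hl1 : lam ≠ α₁) (hl2 : lam ≠ α₂) :
    hmat n α₂ α₁ lam (Cmat n * πᵀ * Cmat n) * hmat n α₁ α₂ lam π
      = 1 + ((α₂ - α₁)/(lam - α₂)) • π
          + ((α₁ - α₂)/(lam - α₁)) • (Cmat n * πᵀ * Cmat n) ∧
    (hmat n α₂ α₁ lam (Cmat n * πᵀ * Cmat n) * hmat n α₁ α₂ lam π) *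
      (1 + ((α₂ - α₁)/(lam - α₂)) • (Cmat n * πᵀ * Cmat n)
         + ((α₁ - α₂)/(lam - α₁)) • π) = 1 ∧
    (1 + ((α₂ - α₁)/(lam - α₂)) • (Cmat n * πᵀ * Cmat n)
       + ((α₁ - α₂)/(lam - α₁)) • π) *
      (hmat n α₂ α₁ lam (Cmat n * πᵀ * Cmat n) * hmat n α₁ α₂ lam π) = 1 ∧
    (hmat n α₂ α₁ lam (Cmat n * πᵀ * Cmat n) * hmat n α₁ α₂ lam π)ᵀ * Cmat n *
      (hmat n α₂ α₁ lam (Cmat n * πᵀ * Cmat n) * hmat n α₁ α₂ lam π) = Cmat n := by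
  set C := Cmat n with hC
  set S := C * πᵀ * C with hSdef
  have hCC : C * C = 1 := Cmat_mul_self n
  have hCs : Cᵀ = C := Cmat_symm n
  set a : ℝ := (α₁ - α₂)/(lam - α₁) with ha
  set b : ℝ := (α₂ - α₁)/(lam - α₂) with hb
  have hne1 : lam - α₁ ≠ 0 := sub_ne_zero.mpr hl1
  have hne2 : lam - α₂ ≠ 0 := sub_ne_zero.mpr hl2
  have hab : a + b + a*b = 0 := by
    rw [ha, hb]; field_simp; ring
  have hSproj : S * S = S := by
    rw [hSdef]
    calc C * πᵀ * C * (C * πᵀ * C) = C * (πᵀ * ((C*C) * πᵀ)) * C := by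
          simp only [Matrix.mul_assoc]
      _ = C * (π * π)ᵀ * C := by rw [hCC, one_mul, ← transpose_mul, Matrix.mul_assoc]
      _ = C * πᵀ * C := by rw [hproj]
  have hgA : hmat n α₂ α₁ lam S * hmat n α₁ α₂ lam π = 1 + b•π + a•S := by
    show (1 + b•(1-S)) * (1 + a•(1-π)) = _
    exact lemA π S hproj hSproj h2 a b hab
  have hgB : (1 + b•π + a•S) * (1 + b•S + a•π) = 1 := lemB π S hproj hSproj h1 h2 a b hab
  have hgB' : (1 + b•S + a•π) * (1 + b•π + a•S) = 1 := by
    have := lemB S π hSproj hproj h2 h1 a b hab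
    convert this using 2
  refine ⟨hgA, ?_, ?_, ?_⟩
  · rw [hgA]; exact hgB
  · rw [hgA]; exact hgB'
  · rw [hgA]
    have e1 : πᵀ * C = C * S := by
      rw [hSdef]
      calc πᵀ * C = (C * C) * (πᵀ * C) := by rw [hCC, one_mul]
        _ = C * (C * πᵀ * C) := by simp only [Matrix.mul_assoc]
    have e2 : Sᵀ * C = C * π := by
      rw [hSdef, transpose_mul, transpose_mul, transpose_transpose, hCs]
      calc C * (π * C) * C = C * (π * (C * C)) := by simp only [Matrix.mul_assoc]
        _ = C * π := by rw [hCC, mul_one]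
    have hT' : (1 + b•π + a•S)ᵀ * C = C * (1 + b•S + a•π) := by
      rw [transpose_add, transpose_add, transpose_one]
      simp only [add_mul, mul_add, one_mul, mul_one, Matrix.smul_mul, Matrix.mul_smul,
        transpose_smul]
      rw [e1, e2]
    calc (1 + b•π + a•S)ᵀ * C * (1 + b•π + a•S)
        = (C * (1 + b•S + a•π)) * (1 + b•π + a•S) := by rw [hT']
      _ = C * ((1 + b•S + a•π) * (1 + b•π + a•S)) := by rw [Matrix.mul_assoc]
      _ = C := by rw [hgB', mul_one]
end

section
/- Let b = ∑_{i=1}^{2n} e_{i+1,i}, β = ½(e_{1,2n} + e_{2,2n+1}), and J_B = b + λβ (a matrix with polynomial entries in an indeterminate λ). Then J_B^{2n+1} = λ J_B. -/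
/-!
Index the standard basis vectors `e_j` of `ℝ[λ]^(2n+1)` from `0`. The matrix `J = J_B` maps
`e_j ↦ e_{j+1}` for `j ≤ 2n-2`, `e_{2n-1} ↦ e_{2n} + (λ/2) e_0` and `e_{2n} ↦ (λ/2) e_1`.
Hence `e_j = J^j e_0` for `j < 2n`, and `J^{2n+1} e_0 = J² e_{2n-1} = λ e_1 = λ J e_0`.
The matrix `J^{2n+1} - λJ` commutes with `J`, so it kills every `J^j e_0`; it also factors
through `J`, so it kills `e_{2n}`, whose image `J e_{2n}` is a multiple of `J e_0`.
-/

open Matrix Polynomial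

/-- `b = ∑_{i=1}^{2n} e_{i+1,i}` (the subdiagonal matrix), over `ℝ[λ]`. -/
noncomputable def bmat (n : ℕ) : Matrix (Fin (2*n+1)) (Fin (2*n+1)) (Polynomial ℝ) :=
  fun i j => if i.val = j.val + 1 then 1 else 0

/-- `β = ½(e_{1,2n} + e_{2,2n+1})`, over `ℝ[λ]`. -/
noncomputable def betamat (n : ℕ) : Matrix (Fin (2*n+1)) (Fin (2*n+1)) (Polynomial ℝ) :=
  fun i j => if (i.val = 0 ∧ j.val + 2 = 2*n+1) ∨ (i.val = 1 ∧ j.val + 1 = 2*n+1)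
    then Polynomial.C (1/2 : ℝ) else 0

namespace Matrix

variable {ι R : Type*} [Fintype ι] [DecidableEq ι] [CommRing R]

theorem pow_mulVec_pow_mulVec_eq_smul {J : Matrix ι ι R} {v : ι → R} {r : R} {N : ℕ}
    (hv : J ^ N *ᵥ v = r • (J *ᵥ v)) (k : ℕ) :
    J ^ N *ᵥ (J ^ k *ᵥ v) = r • (J *ᵥ (J ^ k *ᵥ v)) := by
  rw [mulVec_mulVec, ← pow_mul_comm, ← mulVec_mulVec, hv, mulVec_smul, mulVec_mulVec,
    mulVec_mulVec, ← pow_succ', pow_succ]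

theorem pow_succ_mulVec_eq_smul_of_mulVec_eq_smul {J : Matrix ι ι R} {v w : ι → R} {r c : R}
    {N : ℕ} (hv : J ^ (N + 1) *ᵥ v = r • (J *ᵥ v)) (hw : J *ᵥ w = c • (J *ᵥ v)) :
    J ^ (N + 1) *ᵥ w = r • (J *ᵥ w) := by
  rw [pow_succ, ← mulVec_mulVec, hw, mulVec_smul, mulVec_mulVec, ← pow_succ, hv,
    smul_comm]

end Matrix

noncomputable abbrev jB (n : ℕ) : Matrix (Fin (2*n+1)) (Fin (2*n+1)) ℝ[X] :=
  bmat n + (X : ℝ[X]) • betamat n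

lemma half_X_add_half_X : C (1/2 : ℝ) * X + C (1/2) * X = (X : ℝ[X]) := by
  rw [← add_mul, ← C_add]; norm_num

section
variable {n : ℕ}

lemma jB_mulVec_single_of_lt (j : Fin (2*n+1)) (hj : j.val + 2 < 2*n+1) :
    jB n *ᵥ Pi.single j 1 = Pi.single ⟨j + 1, by omega⟩ 1 := by
  funext i
  simp only [mulVec_single_one, col_apply, Matrix.add_apply, Matrix.smul_apply, jB, bmat, betamat,
    Pi.single_apply, Fin.ext_iff, smul_eq_mul]
  split_ifs <;> first | omega | ring

lemma jB_mulVec_single_penult (hn : 1 ≤ n) :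
    jB n *ᵥ Pi.single ⟨2*n-1, by omega⟩ 1
      = Pi.single (Fin.last (2*n)) 1 + (C (1/2 : ℝ) * X) • Pi.single 0 1 := by
  funext i
  simp only [mulVec_single_one, col_apply, Matrix.add_apply, Matrix.smul_apply, jB, bmat, betamat,
    Pi.single_apply, Pi.add_apply, Pi.smul_apply, Fin.ext_iff, Fin.val_last, Fin.val_zero,
    smul_eq_mul]
  split_ifs <;> first | omega | ring

lemma jB_mulVec_single_last (hn : 1 ≤ n) :
    jB n *ᵥ Pi.single (Fin.last (2*n)) 1 = (C (1/2 : ℝ) * X) • (jB n *ᵥ Pi.single 0 1) := by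
  rw [jB_mulVec_single_of_lt 0 (by simp; omega)]
  funext i
  simp only [mulVec_single_one, col_apply, Matrix.add_apply, Matrix.smul_apply, jB, bmat, betamat,
    Pi.single_apply, Pi.smul_apply, Fin.ext_iff, Fin.val_last, Fin.val_zero, zero_add, and_true,
    smul_eq_mul]
  split_ifs <;> first | omega | ring

lemma jB_pow_mulVec_single_zero {k : ℕ} (hk : k < 2*n) :
    jB n ^ k *ᵥ Pi.single 0 1 = Pi.single ⟨k, by omega⟩ 1 := by
  induction k with
  | zero => rw [pow_zero, one_mulVec]; rfl
  | succ k ih =>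
    rw [pow_succ', ← mulVec_mulVec, ih (by omega), jB_mulVec_single_of_lt _ (by simp; omega)]

lemma jB_pow_two_mul_add_one_mulVec_single_zero (hn : 1 ≤ n) :
    jB n ^ (2*n+1) *ᵥ Pi.single 0 1 = (X : ℝ[X]) • (jB n *ᵥ Pi.single 0 1) := by
  have hpow : jB n ^ (2*n+1) = jB n * (jB n * jB n ^ (2*n-1)) := by
    rw [← pow_succ', ← pow_succ']; congr 1; omega
  rw [hpow, ← mulVec_mulVec, ← mulVec_mulVec,
    jB_pow_mulVec_single_zero (by omega), jB_mulVec_single_penult hn, mulVec_add, mulVec_smul,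
    jB_mulVec_single_last hn, ← add_smul, half_X_add_half_X]

end

/-- `J_B = b + λβ` satisfies `J_B^{2n+1} = λ J_B`. -/
theorem stmt15 (n : ℕ) (hn : 1 ≤ n) :
    (bmat n + (Polynomial.X : Polynomial ℝ) • betamat n)^(2*n+1)
      = (Polynomial.X : Polynomial ℝ) • (bmat n + (Polynomial.X : Polynomial ℝ) • betamat n) := by
  have h0 := jB_pow_two_mul_add_one_mulVec_single_zero hn
  refine ext_of_mulVec_single fun j => ?_
  rw [smul_mulVec]
  obtain hj | rfl := (Fin.le_last j).lt_or_eq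
  · rw [← jB_pow_mulVec_single_zero (k := j) hj]
    exact pow_mulVec_pow_mulVec_eq_smul h0 j
  · exact pow_succ_mulVec_eq_smul_of_mulVec_eq_smul h0 (jB_mulVec_single_last hn)
end

section
/- For n = 1, with b = e_{21} + e_{32}, β₁ = e_{12} + e_{23} and u = q β₁ (q a smooth real function), a smooth map C: ℝ → o(2,1) satisfies [∂_x + b + u, C] ∈ ℝβ₁ pointwise if and only if there is a smooth function ξ with C = (−ξ')e_{11} + (qξ − ξ'')e_{12} + ξ e_{21} + (qξ − ξ'')e_{23} + ξ e_{32} + ξ' e_{33}; in that case [∂_x + b + u, C] = (−ξ''' + 2qξ' + q'ξ) β₁. -/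
open Matrix

/-- `C₁ = e_{13} + e_{31} − e_{22}`. -/
def C1 : Matrix (Fin 3) (Fin 3) ℝ := !![0, 0, 1; 0, -1, 0; 1, 0, 0]

/-- `b = e_{21} + e_{32}`. -/
def bm : Matrix (Fin 3) (Fin 3) ℝ := !![0, 0, 0; 1, 0, 0; 0, 1, 0]

/-- `β₁ = e_{12} + e_{23}`. -/
def beta1 : Matrix (Fin 3) (Fin 3) ℝ := !![0, 1, 0; 0, 0, 1; 0, 0, 0]

/-- Entrywise derivative of a matrix-valued function. -/
noncomputable def derivM (C : ℝ → Matrix (Fin 3) (Fin 3) ℝ) (x : ℝ) :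
    Matrix (Fin 3) (Fin 3) ℝ :=
  Matrix.of fun i j => deriv (fun t => C t i j) x

/-- The bracket `[∂_x + b + u, C] = C' + (b+u)C − C(b+u)` at `x`, where `u = qβ₁`. -/
noncomputable def bracket (q : ℝ → ℝ) (C : ℝ → Matrix (Fin 3) (Fin 3) ℝ) (x : ℝ) :
    Matrix (Fin 3) (Fin 3) ℝ :=
  derivM C x + (bm + q x • beta1) * C x - C x * (bm + q x • beta1)

/-- The explicit form of `C` in terms of `ξ`:
`C = [[−ξ', qξ−ξ'', 0], [ξ, 0, qξ−ξ''], [0, ξ, ξ']]`. -/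
noncomputable def Cform (q ξ : ℝ → ℝ) (x : ℝ) : Matrix (Fin 3) (Fin 3) ℝ :=
  !![-(deriv ξ x), q x * ξ x - deriv (deriv ξ) x, 0;
     ξ x, 0, q x * ξ x - deriv (deriv ξ) x;
     0, ξ x, deriv ξ x]

private lemma derivDiff {f : ℝ → ℝ} (h : ContDiff ℝ ((⊤ : ℕ∞)) f) :
    Differentiable ℝ (deriv f) ∧ ContDiff ℝ ((⊤ : ℕ∞)) (deriv f) := by
  have h2 := (contDiff_infty_iff_deriv.mp h).2
  exact ⟨h2.differentiable (by simp), h2⟩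

private lemma part2aux (q : ℝ → ℝ) (hq : ContDiff ℝ (⊤ : ℕ∞) q)
    (C : ℝ → Matrix (Fin 3) (Fin 3) ℝ)
    (ξ : ℝ → ℝ) (hξ : ContDiff ℝ (⊤ : ℕ∞) ξ) (hCf : ∀ x, C x = Cform q ξ x) (x : ℝ) :
    bracket q C x =
      (-(deriv (deriv (deriv ξ)) x) + 2 * q x * deriv ξ x + deriv q x * ξ x) • beta1 := by
  have hq' : ContDiff ℝ ((⊤ : ℕ∞)) q := hq.of_le (by simp)
  have hξ' : ContDiff ℝ ((⊤ : ℕ∞)) ξ := hξ.of_le (by simp)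
  have hdq : Differentiable ℝ q := hq'.differentiable (by simp)
  have hdξ : Differentiable ℝ ξ := hξ'.differentiable (by simp)
  have hdξ1 : Differentiable ℝ (deriv ξ) := (derivDiff hξ').1
  have hdξ2 : Differentiable ℝ (deriv (deriv ξ)) := (derivDiff (derivDiff hξ').2).1
  have d1 : deriv (fun t => -(deriv ξ t)) x = -(deriv (deriv ξ) x) := deriv.neg
  have d2 : deriv (fun t => q t * ξ t - deriv (deriv ξ) t) x
      = deriv q x * ξ x + q x * deriv ξ x - deriv (deriv (deriv ξ)) x :=
    (((hdq x).hasDerivAt.mul (hdξ x).hasDerivAt).sub (hdξ2 x).hasDerivAt).deriv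
  have hDC : derivM C x = derivM (Cform q ξ) x := by
    unfold derivM
    congr 1
    funext i j
    congr 1
    funext t
    rw [hCf t]
  have hD : derivM (Cform q ξ) x =
      !![-(deriv (deriv ξ) x), deriv q x * ξ x + q x * deriv ξ x - deriv (deriv (deriv ξ)) x, 0;
         deriv ξ x, 0, deriv q x * ξ x + q x * deriv ξ x - deriv (deriv (deriv ξ)) x;
         0, deriv ξ x, deriv (deriv ξ) x] := by
    ext i j
    fin_cases i <;> fin_cases j <;>
      simp [derivM, Cform, d1, d2]
  rw [bracket, hDC, hD, hCf x]
  ext i j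
  fin_cases i <;> fin_cases j <;>
    simp [Cform, bm, beta1, Matrix.mul_apply, Fin.sum_univ_three, Matrix.vecHead,
      Matrix.vecTail, Function.comp] <;>
    ring

theorem stmt19 (q : ℝ → ℝ) (hq : ContDiff ℝ (⊤ : ℕ∞) q)
    (C : ℝ → Matrix (Fin 3) (Fin 3) ℝ)
    (hC : ∀ i j : Fin 3, ContDiff ℝ (⊤ : ℕ∞) (fun x => C x i j))
    (hsl : ∀ x, (C x).trace = 0)
    (ho : ∀ x, (C x)ᵀ * C1 + C1 * C x = 0) :
    ((∀ x : ℝ, ∃ r : ℝ, bracket q C x = r • beta1) ↔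
      ∃ ξ : ℝ → ℝ, ContDiff ℝ (⊤ : ℕ∞) ξ ∧ ∀ x, C x = Cform q ξ x) ∧
    (∀ ξ : ℝ → ℝ, ContDiff ℝ (⊤ : ℕ∞) ξ → (∀ x, C x = Cform q ξ x) →
      ∀ x, bracket q C x =
        (-(deriv (deriv (deriv ξ)) x) + 2 * q x * deriv ξ x + deriv q x * ξ x) • beta1) := by
  have key : ∀ t (i j : Fin 3), ((C t)ᵀ * C1 + C1 * C t) i j = 0 := by
    intro t i j; rw [ho t]; simp
  have h20 : ∀ t, C t 2 0 = 0 := fun t => by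
    have := key t 0 0
    simp [Matrix.mul_apply, Fin.sum_univ_three, C1, Matrix.vecHead, Matrix.vecTail,
      Function.comp, Matrix.vecMul, dotProduct] at this
    linarith
  have h11 : ∀ t, C t 1 1 = 0 := fun t => by
    have := key t 1 1
    simp [Matrix.mul_apply, Fin.sum_univ_three, C1, Matrix.vecHead, Matrix.vecTail,
      Function.comp, Matrix.vecMul, dotProduct] at this
    linarith
  have h02 : ∀ t, C t 0 2 = 0 := fun t => by
    have := key t 2 2
    simp [Matrix.mul_apply, Fin.sum_univ_three, C1, Matrix.vecHead, Matrix.vecTail,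
      Function.comp, Matrix.vecMul, dotProduct] at this
    linarith
  have h21 : ∀ t, C t 2 1 = C t 1 0 := fun t => by
    have := key t 0 1
    simp [Matrix.mul_apply, Fin.sum_univ_three, C1, Matrix.vecHead, Matrix.vecTail,
      Function.comp, Matrix.vecMul, dotProduct] at this
    linarith
  have h12 : ∀ t, C t 1 2 = C t 0 1 := fun t => by
    have := key t 1 2
    simp [Matrix.mul_apply, Fin.sum_univ_three, C1, Matrix.vecHead, Matrix.vecTail,
      Function.comp, Matrix.vecMul, dotProduct] at this
    linarith
  have h22 : ∀ t, C t 2 2 = -(C t 0 0) := fun t => by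
    have := key t 0 2
    simp [Matrix.mul_apply, Fin.sum_univ_three, C1, Matrix.vecHead, Matrix.vecTail,
      Function.comp, Matrix.vecMul, dotProduct] at this
    linarith
  constructor
  · constructor
    · intro h
      refine ⟨fun t => C t 1 0, hC 1 0, fun x => ?_⟩
      have hA : ∀ t, deriv (fun s => C s 1 0) t = -(C t 0 0) := by
        intro t
        obtain ⟨r, hr⟩ := h t
        have hb := congrFun (congrFun hr 1) 0
        simp [bracket, derivM, bm, beta1, Matrix.mul_apply, Fin.sum_univ_three,
          Matrix.vecHead, Matrix.vecTail, Function.comp, Matrix.vecMul, dotProduct,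
          h20 t, h11 t] at hb
        linarith
      have hB : ∀ t, C t 0 1 = deriv (fun s => C s 0 0) t + q t * C t 1 0 := by
        intro t
        obtain ⟨r, hr⟩ := h t
        have hb := congrFun (congrFun hr 0) 0
        simp [bracket, derivM, bm, beta1, Matrix.mul_apply, Fin.sum_univ_three,
          Matrix.vecHead, Matrix.vecTail, Function.comp, Matrix.vecMul,
          dotProduct] at hb
        linarith
      have hdd : deriv (deriv (fun s => C s 1 0)) x = -(deriv (fun s => C s 0 0) x) := by
        rw [funext hA]; exact deriv.neg
      ext i j
      fin_cases i <;> fin_cases j <;>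
        simp [Cform, hA x, hdd, hB x, h20 x, h11 x, h02 x, h21 x, h12 x, h22 x] <;>
        ring
    · rintro ⟨ξ, hξ, hCf⟩ x
      exact ⟨_, part2aux q hq C ξ hξ hCf x⟩
  · intro ξ hξ hCf x
    exact part2aux q hq C ξ hξ hCf x
end
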